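/- arXiv:1806.09489 — 2 statements merged into one kernel-verified Lean document; each statement's English description precedes it below -/
import Mathlib

section
/- Let q be a prime power, let k be a field containing the finite field F_q, and let d be a nonnegative integer. If f ∈ k[X_0, X_1, …, X_n] is a homogeneous polynomial of degree d that is a k-linear combination of projectively reduced monomials, and f(a) = 0 for every a ∈ F_q^{n+1} ∖ {0}, then f is the zero polynomial. -/
/-!
For `x ∈ 𝔽_q` the power `x ^ e` only depends on whether `e = 0` and on `e - 1` modulo `q - 1`,
so replacing every exponent `e ≥ 1` of `f` by its representative in `{1, …, q - 1}` yields a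
polynomial `F` of degree `< q` in each variable that agrees with `f` on `𝔽_q^{n+1}`. By
homogeneity `f` also vanishes at `0`, so `F` vanishes on the grid `𝔽_q^{n+1}` and `F = 0` by the
Combinatorial Nullstellensatz. Finally, the reduction of exponents is injective on projectively
reduced monomials of a fixed degree: it fixes every exponent except possibly that of the last
variable present, and that exponent is recovered from the total degree. Hence the coefficients
of `f` survive in `F`, and `f = 0`.
-/

open MvPolynomial

def reduceExponent (m e : ℕ) : ℕ := if e = 0 then 0 else (e - 1) % m + 1

@[simp]
lemma reduceExponent_zero (m : ℕ) : reduceExponent m 0 = 0 := rfl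

lemma reduceExponent_eq_zero_iff {m e : ℕ} : reduceExponent m e = 0 ↔ e = 0 := by
  unfold reduceExponent
  split_ifs with he <;> simp [he]

lemma reduceExponent_le {m : ℕ} (hm : 0 < m) (e : ℕ) : reduceExponent m e ≤ m := by
  unfold reduceExponent
  split_ifs
  · exact Nat.zero_le m
  · have := Nat.mod_lt (e - 1) hm
    omega

lemma reduceExponent_of_le {m e : ℕ} (he : e ≤ m) : reduceExponent m e = e := by
  unfold reduceExponent
  split_ifs with he0
  · exact he0.symm
  · rw [Nat.mod_eq_of_lt (by omega)]
    omega

lemma pow_reduceExponent {M : Type*} [Monoid M] {x : M} {m : ℕ} (hx : x ^ (m + 1) = x)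
    (e : ℕ) : x ^ reduceExponent m e = x ^ e := by
  unfold reduceExponent
  split_ifs with he
  · rw [he]
  have hstep : ∀ j, x ^ (j + 1) * x ^ m = x ^ (j + 1) := fun j => by
    rw [← pow_add, add_assoc, add_comm 1 m, pow_add, hx, pow_succ]
  have hperiod : ∀ j t, x ^ (j + 1) * (x ^ m) ^ t = x ^ (j + 1) := fun j t => by
    induction t with
    | zero => rw [pow_zero, mul_one]
    | succ t ih => rw [pow_succ (x ^ m), ← mul_assoc, ih, hstep]
  calc x ^ ((e - 1) % m + 1)
      = x ^ ((e - 1) % m + 1) * (x ^ m) ^ ((e - 1) / m) := (hperiod _ _).symm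
    _ = x ^ e := by
      rw [← pow_mul, ← pow_add]
      congr 1
      have := Nat.mod_add_div (e - 1) m
      omega

section Monomials

variable {σ : Type*}

noncomputable def reduceMonomial (m : ℕ) (μ : σ →₀ ℕ) : σ →₀ ℕ :=
  μ.mapRange (reduceExponent m) (reduceExponent_zero m)

@[simp]
lemma reduceMonomial_apply (m : ℕ) (μ : σ →₀ ℕ) (i : σ) :
    reduceMonomial m μ i = reduceExponent m (μ i) :=
  Finsupp.mapRange_apply

/-- For `m = q - 1` this is the condition `deg_{X_i} μ ≤ q - 1` for all `i < ℓ_μ`. -/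
def IsProjectivelyReduced [LT σ] (m : ℕ) (μ : σ →₀ ℕ) : Prop :=
  ∀ i j, i < j → μ j ≠ 0 → μ i ≤ m

lemma Finsupp.eq_of_degree_eq_of_forall_ne {M : Type*} [AddCancelCommMonoid M]
    {μ ν : σ →₀ M} (ℓ : σ) (h : ∀ i, i ≠ ℓ → μ i = ν i) (hdeg : μ.degree = ν.degree) :
    μ = ν := by
  have herase : μ.erase ℓ = ν.erase ℓ := by
    ext i
    by_cases hi : i = ℓ
    · simp [hi]
    · simp [Finsupp.erase_ne hi, h i hi]
  have hℓ : μ ℓ = ν ℓ := by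
    rw [← Finsupp.single_add_erase ℓ μ, ← Finsupp.single_add_erase ℓ ν, map_add, map_add,
      Finsupp.degree_single, Finsupp.degree_single, herase] at hdeg
    exact add_right_cancel hdeg
  rw [← Finsupp.single_add_erase ℓ μ, ← Finsupp.single_add_erase ℓ ν, hℓ, herase]

lemma IsProjectivelyReduced.eq_of_reduceMonomial_eq [LinearOrder σ] {m : ℕ} {μ ν : σ →₀ ℕ}
    (hμ : IsProjectivelyReduced m μ) (hν : IsProjectivelyReduced m ν)
    (hdeg : μ.degree = ν.degree) (h : reduceMonomial m μ = reduceMonomial m ν) : μ = ν := by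
  have hred : ∀ i, reduceExponent m (μ i) = reduceExponent m (ν i) := fun i => by
    simpa using DFunLike.congr_fun h i
  have hzero : ∀ i, μ i = 0 ↔ ν i = 0 := fun i => by
    rw [← reduceExponent_eq_zero_iff (m := m), hred, reduceExponent_eq_zero_iff]
  rcases μ.support.eq_empty_or_nonempty with hempty | hne
  · ext i
    have hμi : μ i = 0 := by simp [Finsupp.support_eq_empty.mp hempty]
    rw [hμi, (hzero i).mp hμi]
  set ℓ := μ.support.max' hne
  have hμℓ : μ ℓ ≠ 0 := Finsupp.mem_support_iff.mp (μ.support.max'_mem hne)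
  have hνℓ : ν ℓ ≠ 0 := (hzero ℓ).not.mp hμℓ
  refine Finsupp.eq_of_degree_eq_of_forall_ne ℓ (fun i hi => ?_) hdeg
  by_cases hμi : μ i = 0
  · rw [hμi, (hzero i).mp hμi]
  have hlt : i < ℓ := (μ.support.le_max' i (Finsupp.mem_support_iff.mpr hμi)).lt_of_ne hi
  calc μ i = reduceExponent m (μ i) := (reduceExponent_of_le (hμ i ℓ hlt hμℓ)).symm
    _ = reduceExponent m (ν i) := hred i
    _ = ν i := reduceExponent_of_le (hν i ℓ hlt hνℓ)

end Monomials

namespace MvPolynomial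

variable {σ R : Type*} [CommSemiring R] {m : ℕ}

noncomputable def reduceExponents (m : ℕ) (p : MvPolynomial σ R) : MvPolynomial σ R :=
  ∑ μ ∈ p.support, monomial (reduceMonomial m μ) (p.coeff μ)

lemma eval_reduceExponents {x : σ → R} (hx : ∀ i, x i ^ (m + 1) = x i) (p : MvPolynomial σ R) :
    eval x (p.reduceExponents m) = eval x p := by
  conv_rhs => rw [p.as_sum]
  simp only [reduceExponents, map_sum, eval_monomial]
  refine Finset.sum_congr rfl fun μ _ => congrArg _ ?_
  rw [reduceMonomial, Finsupp.prod_mapRange_index fun i => pow_zero (x i)]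
  exact Finsupp.prod_congr fun i _ => pow_reduceExponent (hx i) (μ i)

lemma degreeOf_reduceExponents_le (hm : 0 < m) (p : MvPolynomial σ R) (i : σ) :
    (p.reduceExponents m).degreeOf i ≤ m := by
  classical
  rw [degreeOf_le_iff]
  intro ν hν
  obtain ⟨μ, -, hνμ⟩ := Finset.mem_biUnion.mp (support_sum hν)
  rw [Finset.mem_singleton.mp (support_monomial_subset hνμ), reduceMonomial_apply]
  exact reduceExponent_le hm (μ i)

lemma coeff_reduceExponents_reduceMonomial {p : MvPolynomial σ R}
    (hinj : Set.InjOn (reduceMonomial m) (p.support : Set (σ →₀ ℕ))) {μ : σ →₀ ℕ}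
    (hμ : μ ∈ p.support) :
    (p.reduceExponents m).coeff (reduceMonomial m μ) = p.coeff μ := by
  classical
  rw [reduceExponents, coeff_sum, Finset.sum_eq_single_of_mem μ hμ, coeff_monomial, if_pos rfl]
  intro ν hν hne
  rw [coeff_monomial, if_neg fun h => hne (hinj hν hμ h)]

lemma eq_zero_of_reduceExponents_eq_zero {p : MvPolynomial σ R}
    (hinj : Set.InjOn (reduceMonomial m) (p.support : Set (σ →₀ ℕ)))
    (h : p.reduceExponents m = 0) : p = 0 := by
  ext μ
  by_cases hμ : μ ∈ p.support
  · rw [← coeff_reduceExponents_reduceMonomial hinj hμ, h, coeff_zero, coeff_zero]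
  · rw [coeff_zero]
    exact notMem_support_iff.mp hμ

lemma IsHomogeneous.injOn_reduceMonomial [LinearOrder σ] {p : MvPolynomial σ R} {d : ℕ}
    (hp : p.IsHomogeneous d) (hred : ∀ μ ∈ p.support, IsProjectivelyReduced m μ) :
    Set.InjOn (reduceMonomial m) (p.support : Set (σ →₀ ℕ)) := by
  have hdeg : ∀ μ ∈ p.support, μ.degree = d := fun μ hμ => by
    rw [Finsupp.degree_eq_weight_one]
    exact hp (mem_support_iff.mp hμ)
  exact fun μ hμ ν hν => (hred μ hμ).eq_of_reduceMonomial_eq (hred ν hν)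
    ((hdeg μ hμ).trans (hdeg ν hν).symm)

lemma IsHomogeneous.eval_zero_eq_zero_of_eval_eq_zero {p : MvPolynomial σ R} {d : ℕ}
    (hp : p.IsHomogeneous d) {x : σ → R} (hx : eval x p = 0) : eval 0 p = 0 := by
  rw [eval_zero, constantCoeff_eq]
  rcases eq_or_ne d 0 with rfl | hd
  · rw [totalDegree_eq_zero_iff_eq_C.mp (Nat.eq_zero_of_le_zero hp.totalDegree_le), eval_C] at hx
    simpa using hx
  · exact hp.coeff_eq_zero (by simpa using hd.symm)

lemma eq_zero_of_eval_subfield_eq_zero {k : Type*} [Field k] [Finite σ] (K : Subfield k)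
    [Fintype K] {p : MvPolynomial σ k} (hdeg : ∀ i, p.degreeOf i < Fintype.card K)
    (heval : ∀ a : σ → K, eval (fun i => (a i : k)) p = 0) : p = 0 :=
  eq_zero_of_eval_zero_at_prod_finset p (fun _ => Finset.univ.map (Function.Embedding.subtype _))
    (by simpa using hdeg) fun x hx => heval fun i => ⟨x i, by simpa using hx i⟩

end MvPolynomial

/-- If `f ∈ k[X_0,…,X_n]` is homogeneous of degree `d`, is a `k`-linear combination of
projectively reduced monomials (i.e. every monomial `μ` in its support satisfies
`deg_{X_i} μ ≤ q - 1` whenever some variable `X_j` with `j > i` occurs in `μ`), and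
`f(a) = 0` for every `a ∈ F_q^{n+1} \ {0}`, then `f = 0`. -/
theorem projectively_reduced_homogeneous_vanishing_eq_zero
    (q n d : ℕ) (hq : IsPrimePow q) (k : Type*) [Field k]
    (Fq : Subfield k) (hcard : Nat.card Fq = q)
    (f : MvPolynomial (Fin (n + 1)) k)
    (hhom : f.IsHomogeneous d)
    (hred : ∀ μ ∈ f.support, ∀ i j : Fin (n + 1), i < j → μ j ≠ 0 → μ i ≤ q - 1)
    (hvan : ∀ a : Fin (n + 1) → Fq, a ≠ 0 →
      MvPolynomial.eval (fun i => (a i : k)) f = 0) :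
    f = 0 := by
  have : Finite Fq := Nat.finite_of_card_ne_zero (hcard ▸ hq.ne_zero)
  let := Fintype.ofFinite Fq
  have hcard' : Fintype.card Fq = q := Nat.card_eq_fintype_card.symm.trans hcard
  have hq1 : 0 < q - 1 := by have := hq.two_le; omega
  have hpow : ∀ x : Fq, (x : k) ^ (q - 1 + 1) = x := fun x => by
    rw [Nat.sub_add_cancel hq.one_lt.le, ← hcard']
    exact_mod_cast FiniteField.pow_card x
  have hgrid : ∀ a : Fin (n + 1) → Fq, eval (fun i => (a i : k)) f = 0 := by
    intro a
    rcases eq_or_ne a 0 with rfl | ha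
    · simpa using hhom.eval_zero_eq_zero_of_eval_eq_zero (hvan 1 one_ne_zero)
    · exact hvan a ha
  refine eq_zero_of_reduceExponents_eq_zero (hhom.injOn_reduceMonomial hred) ?_
  refine eq_zero_of_eval_subfield_eq_zero Fq (fun i => ?_) fun a => ?_
  · have := degreeOf_reduceExponents_le hq1 f i
    omega
  · rw [eval_reduceExponents fun i => hpow (a i)]
    exact hgrid a
end

section
/- Let q be a prime power, let k be a field containing the finite field F_q, and let d be a nonnegative integer. Every homogeneous polynomial f ∈ k[X_0, X_1, …, X_n] of degree d can be written uniquely as f = g + γ, where g is a k-linear combination of projectively reduced monomials of degree d and γ is a homogeneous polynomial of degree d in the ideal Γ*_q(k); consequently, the space 𝒮_d of homogeneous polynomials of degree d decomposes as 𝒮_d = 𝔯_d ⊕ Γ*_q(k)_d. -/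
/-!
A monomial that is not projectively reduced is divisible by `X_i^q X_j` for some `i < j`.
Trading this factor for `X_i X_j^q` changes the monomial by a multiple of a Fermat polynomial and
moves exponent to a later variable, which lowers the weight `∑ μ_l (m - l)`. Hence every
homogeneous polynomial is congruent modulo `Γ*_q` to a projectively reduced one of the same degree.

For uniqueness: elements of `Γ*_q` vanish on `F_q^{n+1}`, and a projectively reduced homogeneous
polynomial vanishing there is zero. Expanding it in `X_0`, reducedness leaves only the monomial
`X_0^d` in `X_0`-degree at least `q`, and its coefficient is the value at `(1, 0, …, 0)`. So the
`X_0`-degree is below `q`, every coefficient vanishes on `F_q^n`, and induction on the number of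
variables applies.
-/

open MvPolynomial

namespace Finsupp

def IsProjectivelyReduced {σ : Type*} [LinearOrder σ] (q : ℕ) (μ : σ →₀ ℕ) : Prop :=
  ∀ i j, i < j → μ j ≠ 0 → μ i ≤ q - 1

theorem exists_eq_add_of_not_isProjectivelyReduced {σ : Type*} [LinearOrder σ] {q : ℕ}
    {μ : σ →₀ ℕ} (h : ¬μ.IsProjectivelyReduced q) :
    ∃ i j, i < j ∧ ∃ ν, μ = ν + (single i q + single j 1) := by
  simp only [IsProjectivelyReduced, not_forall] at h
  obtain ⟨i, j, hij, hj, hi⟩ := h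
  refine ⟨i, j, hij, μ - (single i q + single j 1), (tsub_add_cancel_of_le fun l => ?_).symm⟩
  simp only [coe_add, Pi.add_apply, single_apply]
  split_ifs with hil hjl hjl
  · exact absurd (hil.trans hjl.symm) hij.ne
  all_goals subst_vars; omega

variable {m : ℕ}

theorem degree_cons (e : ℕ) (ν : Fin m →₀ ℕ) : (cons e ν).degree = e + ν.degree := by
  simp [degree_eq_sum, Fin.sum_univ_succ]

theorem weight_fermat_step_lt {q : ℕ} (hq : 2 ≤ q) {i j : Fin m} (hij : i < j)
    (ν : Fin m →₀ ℕ) :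
    weight (fun l : Fin m => m - (l : ℕ)) (ν + (single i 1 + single j q)) <
      weight (fun l : Fin m => m - (l : ℕ)) (ν + (single i q + single j 1)) := by
  have hji : m - (j : ℕ) < m - i := by omega
  simp only [map_add, weight_single, smul_eq_mul]
  nlinarith

namespace IsProjectivelyReduced

variable {q e : ℕ} {ν : Fin m →₀ ℕ}

theorem of_cons (h : (cons e ν).IsProjectivelyReduced q) : ν.IsProjectivelyReduced q :=
  fun i j hij hj => by
    simpa using h i.succ j.succ (Fin.succ_lt_succ_iff.2 hij) (by simpa using hj)

theorem le_of_cons (h : (cons e ν).IsProjectivelyReduced q) (hν : ν ≠ 0) : e ≤ q - 1 := by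
  obtain ⟨j, hj⟩ := Finsupp.ne_iff.1 hν
  simpa using h 0 j.succ (Fin.succ_pos j) (by simpa using hj)

end IsProjectivelyReduced

end Finsupp

namespace MvPolynomial

/-- The space `𝔯_d`. -/
noncomputable def reducedSubmodule (R : Type*) [CommRing R] (σ : Type*) [LinearOrder σ]
    (q d : ℕ) : Submodule R (MvPolynomial σ R) :=
  restrictSupport R {μ | μ.IsProjectivelyReduced q ∧ μ.degree = d}

/-- The ideal `Γ*_q`. -/
noncomputable def fermatIdeal (R : Type*) [CommRing R] {σ : Type*} [LinearOrder σ] (q : ℕ) :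
    Ideal (MvPolynomial σ R) :=
  Ideal.span {g | ∃ i j : σ, i < j ∧ g = X i ^ q * X j - X i * X j ^ q}

variable {R : Type*} [CommRing R]

theorem X_pow_mul_X_sub_X_mul_X_pow_eq {σ : Type*} (i j : σ) (q : ℕ) :
    (X i ^ q * X j - X i * X j ^ q : MvPolynomial σ R) =
      monomial (Finsupp.single i q + Finsupp.single j 1) 1 -
        monomial (Finsupp.single i 1 + Finsupp.single j q) 1 := by
  rw [X_pow_eq_monomial, X_pow_eq_monomial]
  simp only [X, monomial_mul, one_mul]

section LinearOrder

variable {σ : Type*} [LinearOrder σ] {q d : ℕ}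

theorem mem_reducedSubmodule_iff {p : MvPolynomial σ R} :
    p ∈ reducedSubmodule R σ q d ↔
      p.IsHomogeneous d ∧ ∀ μ ∈ p.support, μ.IsProjectivelyReduced q := by
  simp [reducedSubmodule, mem_restrictSupport_iff, Set.subset_def, IsHomogeneous,
    IsWeightedHomogeneous, Finsupp.degree_eq_weight_one, Pi.one_def, forall_and, and_comm]

theorem eval_eq_zero_of_mem_fermatIdeal {x : σ → R} (hx : ∀ i, x i ^ q = x i)
    {γ : MvPolynomial σ R} (hγ : γ ∈ fermatIdeal R q) : eval x γ = 0 := by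
  suffices fermatIdeal R q ≤ RingHom.ker (eval x) from this hγ
  refine Ideal.span_le.2 ?_
  rintro _ ⟨i, j, -, rfl⟩
  simp [hx]

end LinearOrder

variable {m q d : ℕ}

theorem monomial_mem_reducedSubmodule_sup_fermatIdeal (hq : 2 ≤ q) (μ : Fin m →₀ ℕ) :
    monomial μ (1 : R) ∈
      reducedSubmodule R (Fin m) q μ.degree ⊔ (fermatIdeal R q).restrictScalars R := by
  induction hw : Finsupp.weight (fun l : Fin m => m - (l : ℕ)) μ
    using Nat.strong_induction_on generalizing μ with
  | _ w ih =>
  by_cases hμ : μ.IsProjectivelyReduced q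
  · exact Submodule.mem_sup_left (by simp [reducedSubmodule, hμ])
  obtain ⟨i, j, hij, ν, rfl⟩ := Finsupp.exists_eq_add_of_not_isProjectivelyReduced hμ
  set μ' := ν + (Finsupp.single i 1 + Finsupp.single j q)
  have hdeg : μ'.degree = (ν + (Finsupp.single i q + Finsupp.single j 1)).degree := by
    simp [μ', add_comm]
  have hstep : monomial (ν + (Finsupp.single i q + Finsupp.single j 1)) (1 : R) =
      monomial μ' 1 + monomial ν 1 * (X i ^ q * X j - X i * X j ^ q) := by
    rw [X_pow_mul_X_sub_X_mul_X_pow_eq, mul_sub, monomial_mul, monomial_mul, one_mul]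
    abel
  rw [hstep, ← hdeg]
  refine Submodule.add_mem _ (ih _ (hw ▸ Finsupp.weight_fermat_step_lt hq hij ν) μ' rfl)
    (Submodule.mem_sup_right ?_)
  exact Ideal.mul_mem_left _ _ (Ideal.subset_span ⟨i, j, hij, rfl⟩)

theorem homogeneousSubmodule_le_reducedSubmodule_sup_fermatIdeal (hq : 2 ≤ q) (d : ℕ) :
    homogeneousSubmodule (Fin m) R d ≤
      reducedSubmodule R (Fin m) q d ⊔ (fermatIdeal R q).restrictScalars R := by
  rw [homogeneousSubmodule_eq_finsupp_supported, ← restrictSupport, restrictSupport_eq_span,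
    Submodule.span_le]
  rintro _ ⟨μ, rfl : μ.degree = d, rfl⟩
  exact monomial_mem_reducedSubmodule_sup_fermatIdeal hq μ

theorem coeff_finSuccEquiv_mem_reducedSubmodule {g : MvPolynomial (Fin (m + 1)) R}
    (hg : g ∈ reducedSubmodule R (Fin (m + 1)) q d) (e : ℕ) :
    (finSuccEquiv R m g).coeff e ∈ reducedSubmodule R (Fin m) q (d - e) := by
  intro ν hν
  obtain ⟨hred, hdeg⟩ := hg (mem_support_coeff_finSuccEquiv.1 hν)
  rw [Finsupp.degree_cons] at hdeg
  exact ⟨hred.of_cons, by omega⟩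

theorem natDegree_finSuccEquiv_le {g : MvPolynomial (Fin (m + 1)) R}
    (hg : g ∈ reducedSubmodule R (Fin (m + 1)) q d) (hd : coeff (Finsupp.single 0 d) g = 0) :
    (finSuccEquiv R m g).natDegree ≤ q - 1 := by
  refine Polynomial.natDegree_le_iff_coeff_eq_zero.2 fun e he => ?_
  ext ν
  rw [finSuccEquiv_coeff_coeff, coeff_zero]
  by_contra hne
  obtain ⟨hred, hdeg⟩ := hg (mem_support_iff.2 hne)
  rcases eq_or_ne ν 0 with rfl | hν
  · simp only [Finsupp.degree_cons, map_zero, add_zero] at hdeg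
    rw [hdeg, Finsupp.cons_zero_eq_single_zero] at hne
    exact hne hd
  · have := hred.le_of_cons hν
    omega

theorem eval_cons_one_zero {g : MvPolynomial (Fin (m + 1)) R} (hg : g.IsHomogeneous d) :
    eval (Fin.cons 1 0) g = coeff (Finsupp.single 0 d) g := by
  have hmap : (finSuccEquiv R m g).map (eval 0) =
      Polynomial.monomial d (coeff (Finsupp.single 0 d) g) := by
    ext e
    rw [Polynomial.coeff_map, eval_zero, constantCoeff_eq, finSuccEquiv_coeff_coeff,
      Finsupp.cons_zero_eq_single_zero, Polynomial.coeff_monomial]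
    split_ifs with hde
    · rw [hde]
    · exact hg.coeff_eq_zero (by simpa using Ne.symm hde)
  rw [eval_eq_eval_mv_eval', hmap, Polynomial.eval_monomial, one_pow, mul_one]

section IsDomain

variable [IsDomain R] {S : Finset R}

theorem eval_coeff_finSuccEquiv_eq_zero {g : MvPolynomial (Fin (m + 1)) R}
    (hdeg : (finSuccEquiv R m g).natDegree < S.card)
    (hg : ∀ x : Fin (m + 1) → R, (∀ i, x i ∈ S) → eval x g = 0) (e : ℕ) {y : Fin m → R}
    (hy : ∀ i, y i ∈ S) : eval y ((finSuccEquiv R m g).coeff e) = 0 := by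
  have hmap : (finSuccEquiv R m g).map (eval y) = 0 :=
    Polynomial.eq_zero_of_natDegree_lt_card_of_eval_eq_zero' _ S
      (fun t ht => by rw [← eval_eq_eval_mv_eval']; exact hg _ (Fin.cases ht hy))
      (Polynomial.natDegree_map_le.trans_lt hdeg)
  simpa using congrArg (Polynomial.coeff · e) hmap

theorem eq_zero_of_mem_reducedSubmodule_of_eval_eq_zero (h0 : 0 ∈ S) (h1 : 1 ∈ S)
    (hq : q ≤ S.card) {g : MvPolynomial (Fin m) R} (hg : g ∈ reducedSubmodule R (Fin m) q d)
    (hvan : ∀ x : Fin m → R, (∀ i, x i ∈ S) → eval x g = 0) : g = 0 := by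
  induction m generalizing d with
  | zero =>
    rw [eq_C_of_isEmpty g] at hvan ⊢
    simpa using hvan Fin.elim0 fun i => i.elim0
  | succ m ih =>
    have hdeg : (finSuccEquiv R m g).natDegree < S.card := by
      have hd : coeff (Finsupp.single 0 d) g = 0 := by
        rw [← eval_cons_one_zero (mem_reducedSubmodule_iff.1 hg).1]
        exact hvan _ (Fin.cases h1 fun _ => h0)
      have := natDegree_finSuccEquiv_le hg hd
      have := Finset.card_pos.2 ⟨0, h0⟩
      omega
    refine (finSuccEquiv R m).injective (Polynomial.ext fun e => ?_)
    rw [map_zero, Polynomial.coeff_zero]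
    exact ih (coeff_finSuccEquiv_mem_reducedSubmodule hg e)
      fun y hy => eval_coeff_finSuccEquiv_eq_zero hdeg hvan e hy

theorem disjoint_reducedSubmodule_fermatIdeal (h0 : 0 ∈ S) (h1 : 1 ∈ S) (hq : q ≤ S.card)
    (hS : ∀ t ∈ S, t ^ q = t) (d : ℕ) :
    Disjoint (reducedSubmodule R (Fin m) q d) ((fermatIdeal R q).restrictScalars R) :=
  Submodule.disjoint_def.2 fun _ hg hγ => eq_zero_of_mem_reducedSubmodule_of_eval_eq_zero
    h0 h1 hq hg fun _ hx => eval_eq_zero_of_mem_fermatIdeal (fun i => hS _ (hx i)) hγ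

end IsDomain

theorem disjoint_reducedSubmodule_fermatIdeal_of_subfield {k : Type*} [Field k]
    (Fq : Subfield k) [Fintype Fq] (d : ℕ) :
    Disjoint (reducedSubmodule k (Fin m) (Fintype.card Fq) d)
      ((fermatIdeal k (Fintype.card Fq)).restrictScalars k) := by
  let S : Finset k := Finset.univ.map (Function.Embedding.subtype (· ∈ Fq))
  refine disjoint_reducedSubmodule_fermatIdeal (S := S) (by simp [S]) (by simp [S])
    (by rw [Finset.card_map, Finset.card_univ]) ?_ d
  simp only [S, Finset.mem_map, Finset.mem_univ, true_and, forall_exists_index]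
  rintro _ t rfl
  rw [Function.Embedding.subtype_apply, ← SubmonoidClass.coe_pow, FiniteField.pow_card]

end MvPolynomial

/-- Every homogeneous polynomial `f ∈ k[X_0,…,X_n]` of degree `d` can be written
uniquely as `f = g + γ` where `g` is a `k`-linear combination of projectively reduced
monomials of degree `d` and `γ` is a homogeneous polynomial of degree `d` lying in the
ideal `Γ*_q(k)` generated by the Fermat polynomials `X_i^q X_j - X_i X_j^q` (`i < j`);
i.e. `𝒮_d = 𝔯_d ⊕ Γ*_q(k)_d`. -/
theorem existsUnique_projectivelyReduced_add_fermat
    (q n d : ℕ) (hq : IsPrimePow q) (k : Type*) [Field k]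
    (Fq : Subfield k) (hcard : Nat.card Fq = q)
    (f : MvPolynomial (Fin (n + 1)) k)
    (hhom : f.IsHomogeneous d) :
    ∃! p : MvPolynomial (Fin (n + 1)) k × MvPolynomial (Fin (n + 1)) k,
      p.1.IsHomogeneous d ∧
      (∀ μ ∈ p.1.support, ∀ i j : Fin (n + 1), i < j → μ j ≠ 0 → μ i ≤ q - 1) ∧
      p.2.IsHomogeneous d ∧
      p.2 ∈ Ideal.span {g : MvPolynomial (Fin (n + 1)) k |
        ∃ i j : Fin (n + 1), i < j ∧ g = X i ^ q * X j - X i * X j ^ q} ∧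
      f = p.1 + p.2 := by
  have hq2 := hq.two_le
  have : Fintype Fq := @Fintype.ofFinite _ (Nat.finite_of_card_ne_zero (by omega))
  rw [Nat.card_eq_fintype_card] at hcard
  subst hcard
  obtain ⟨g, hg, γ, hγ, rfl⟩ := Submodule.mem_sup.1
    (homogeneousSubmodule_le_reducedSubmodule_sup_fermatIdeal hq2 d hhom)
  obtain ⟨hg_hom, hg_red⟩ := mem_reducedSubmodule_iff.1 hg
  refine ⟨(g, γ), ⟨hg_hom, hg_red, by simpa using hhom.sub hg_hom, hγ, rfl⟩, ?_⟩
  rintro ⟨g', γ'⟩ ⟨hg'_hom, hg'_red, -, hγ', heq⟩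
  have hgg : g' - g = 0 := Submodule.disjoint_def.1
    (disjoint_reducedSubmodule_fermatIdeal_of_subfield Fq d) _
    (sub_mem (mem_reducedSubmodule_iff.2 ⟨hg'_hom, hg'_red⟩) hg)
    (by rw [show g' - g = γ - γ' by linear_combination -heq]; exact sub_mem hγ hγ')
  obtain rfl : g' = g := sub_eq_zero.1 hgg
  obtain rfl : γ' = γ := (add_left_cancel heq).symm
  rfl
end
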